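/- Let g be a 3-BiHom-Lie superalgebra that is nilpotent. Then the T_θ-extension g ⊕ g* is nilpotent. -/

import Mathlib

structure Is3BiHomLieSuper (𝕜 : Type*) [Field 𝕜] {V : Type*} [AddCommGroup V] [Module 𝕜 V]
    (G : ZMod 2 → Submodule 𝕜 V) (br : V → V → V → V) (α β : V →ₗ[𝕜] V) : Prop where
  sup_top : G 0 ⊔ G 1 = ⊤
  inf_bot : G 0 ⊓ G 1 = ⊥
  add₁ : ∀ x x' y z : V, br (x + x') y z = br x y z + br x' y z
  smul₁ : ∀ (c : 𝕜) (x y z : V), br (c • x) y z = c • br x y z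
  add₂ : ∀ x y y' z : V, br x (y + y') z = br x y z + br x y' z
  smul₂ : ∀ (c : 𝕜) (x y z : V), br x (c • y) z = c • br x y z
  add₃ : ∀ x y z z' : V, br x y (z + z') = br x y z + br x y z'
  smul₃ : ∀ (c : 𝕜) (x y z : V), br x y (c • z) = c • br x y z
  α_even : ∀ i, ∀ x ∈ G i, α x ∈ G i
  β_even : ∀ i, ∀ x ∈ G i, β x ∈ G i
  br_grade : ∀ i j k, ∀ x ∈ G i, ∀ y ∈ G j, ∀ z ∈ G k, br x y z ∈ G (i + j + k)
  comm : ∀ x, α (β x) = β (α x)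
  mult_α : ∀ x y z, α (br x y z) = br (α x) (α y) (α z)
  mult_β : ∀ x y z, β (br x y z) = br (β x) (β y) (β z)
  skew₁ : ∀ (i j : ZMod 2), ∀ x ∈ G i, ∀ y ∈ G j, ∀ z : V,
    br (β x) (β y) (α z) = -((-1 : 𝕜) ^ (i.val * j.val)) • br (β y) (β x) (α z)
  skew₂ : ∀ (j k : ZMod 2), ∀ y ∈ G j, ∀ z ∈ G k, ∀ x : V,
    br (β x) (β y) (α z) = -((-1 : 𝕜) ^ (j.val * k.val)) • br (β x) (β z) (α y)
  jacobi : ∀ (ix iy iz iu iv : ZMod 2), ∀ x ∈ G ix, ∀ y ∈ G iy, ∀ z ∈ G iz, ∀ u ∈ G iu, ∀ v ∈ G iv,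
    br (β (β x)) (β (β y)) (br (β z) (β u) (α v)) =
      (-1 : 𝕜) ^ ((iu.val + iv.val) * (ix.val + iy.val + iz.val)) •
        br (β (β u)) (β (β v)) (br (β x) (β y) (α z)) -
      (-1 : 𝕜) ^ ((iz.val + iv.val) * (ix.val + iy.val) + iu.val * iv.val) •
        br (β (β z)) (β (β v)) (br (β x) (β y) (α u)) +
      (-1 : 𝕜) ^ ((iz.val + iu.val) * (ix.val + iy.val)) •
        br (β (β z)) (β (β u)) (br (β x) (β y) (α v))

structure Is3Cocycle (𝕜 : Type*) [Field 𝕜] {V M : Type*} [AddCommGroup V] [Module 𝕜 V]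
    [AddCommGroup M] [Module 𝕜 M]
    (G : ZMod 2 → Submodule 𝕜 V) (br : V → V → V → V) (α β : V →ₗ[𝕜] V)
    (GM : ZMod 2 → Submodule 𝕜 M) (ρ : V → V → M →ₗ[𝕜] M) (αM βM : M →ₗ[𝕜] M)
    (θ : V → V → V → M) : Prop where
  θadd₁ : ∀ x x' y z : V, θ (x + x') y z = θ x y z + θ x' y z
  θsmul₁ : ∀ (c : 𝕜) (x y z : V), θ (c • x) y z = c • θ x y z
  θadd₂ : ∀ x y y' z : V, θ x (y + y') z = θ x y z + θ x y' z
  θsmul₂ : ∀ (c : 𝕜) (x y z : V), θ x (c • y) z = c • θ x y z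
  θadd₃ : ∀ x y z z' : V, θ x y (z + z') = θ x y z + θ x y z'
  θsmul₃ : ∀ (c : 𝕜) (x y z : V), θ x y (c • z) = c • θ x y z
  θeven : ∀ (i j k : ZMod 2), ∀ x ∈ G i, ∀ y ∈ G j, ∀ z ∈ G k, θ x y z ∈ GM (i + j + k)
  equiv_α : ∀ x y z, αM (θ x y z) = θ (α x) (α y) (α z)
  equiv_β : ∀ x y z, βM (θ x y z) = θ (β x) (β y) (β z)
  cskew₁ : ∀ (i j : ZMod 2), ∀ x ∈ G i, ∀ y ∈ G j, ∀ z : V,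
    θ (β x) (β y) (α z) = -((-1 : 𝕜) ^ (i.val * j.val)) • θ (β y) (β x) (α z)
  cskew₂ : ∀ (j k : ZMod 2), ∀ y ∈ G j, ∀ z ∈ G k, ∀ x : V,
    θ (β x) (β y) (α z) = -((-1 : 𝕜) ^ (j.val * k.val)) • θ (β x) (β z) (α y)
  cocycle : ∀ (i1 i2 i3 i4 i5 : ZMod 2), ∀ x1 ∈ G i1, ∀ x2 ∈ G i2, ∀ x3 ∈ G i3,
      ∀ x4 ∈ G i4, ∀ x5 ∈ G i5,
    θ (β (β x1)) (β (β x2)) (br (β x3) (β x4) (α x5)) +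
      ρ (β (β x1)) (β (β x2)) (θ (β x3) (β x4) (α x5)) =
    (-1 : 𝕜) ^ ((i4.val + i5.val) * (i1.val + i2.val + i3.val)) •
      (θ (β (β x4)) (β (β x5)) (br (β x1) (β x2) (α x3)) +
        ρ (β (β x4)) (β (β x5)) (θ (β x1) (β x2) (α x3))) -
    (-1 : 𝕜) ^ ((i3.val + i5.val) * (i1.val + i2.val) + i4.val * i5.val) •
      (θ (β (β x3)) (β (β x5)) (br (β x1) (β x2) (α x4)) +
        ρ (β (β x3)) (β (β x5)) (θ (β x1) (β x2) (α x4))) +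
    (-1 : 𝕜) ^ ((i3.val + i4.val) * (i1.val + i2.val)) •
      (θ (β (β x3)) (β (β x4)) (br (β x1) (β x2) (α x5)) +
        ρ (β (β x3)) (β (β x4)) (θ (β x1) (β x2) (α x5)))

/-- The span of all brackets `br x y z` with `x ∈ P`, `y ∈ Q`, `z ∈ R`. -/
def tripleSpan (𝕜 : Type*) [Field 𝕜] {V : Type*} [AddCommGroup V] [Module 𝕜 V]
    (br : V → V → V → V) (P Q R : Submodule 𝕜 V) : Submodule 𝕜 V :=
  Submodule.span 𝕜 {w : V | ∃ x ∈ P, ∃ y ∈ Q, ∃ z ∈ R, w = br x y z}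

/-- Derived series: `g^{(0)} = g`, `g^{(n+1)} = [g^{(n)}, g^{(n)}, g]`. -/
def derivedSeries3 (𝕜 : Type*) [Field 𝕜] {V : Type*} [AddCommGroup V] [Module 𝕜 V]
    (br : V → V → V → V) : ℕ → Submodule 𝕜 V
  | 0 => ⊤
  | n + 1 => tripleSpan 𝕜 br (derivedSeries3 𝕜 br n) (derivedSeries3 𝕜 br n) ⊤

/-- Central descending series: `g^0 = g`, `g^{n+1} = [g^n, g, g]`. -/
def lowerSeries3 (𝕜 : Type*) [Field 𝕜] {V : Type*} [AddCommGroup V] [Module 𝕜 V]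
    (br : V → V → V → V) : ℕ → Submodule 𝕜 V
  | 0 => ⊤
  | n + 1 => tripleSpan 𝕜 br (lowerSeries3 𝕜 br n) ⊤ ⊤

/-! The projection `g ⊕ g* → g` respects the brackets, so once `g^K = 0` the `K`-th term of the
central series of the extension lies in `g*`. For `f ∈ g*` the functional `[f, (v, y), (w, z)]_θ`
sends `t` to a sign times `f (βi (α [v, αi (β w), t]))`, and skew-symmetry moves an entry of `g^n`
from the last slot of a bracket to the first, so `[g, g, g^n] ⊆ g^(n+1)`. Hence bracketing maps the
annihilator of `g^(n+1)` into the annihilator of `g^n`, and `K` further steps reach the annihilator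
of `g`, which is zero. The bracket formulas are only available for homogeneous arguments, which is
why the central series of `g` has to be shown to be graded. -/

section Trilinear

variable {R M N : Type*} [Semiring R] [AddCommMonoid M] [Module R M] [AddCommMonoid N] [Module R N]

theorem trilinear_mem_of_homogeneous {A : M → M → M → N}
    (h₁ : ∀ p p' q r, A (p + p') q r = A p q r + A p' q r)
    (h₂ : ∀ p q q' r, A p (q + q') r = A p q r + A p q' r)
    (h₃ : ∀ p q r r', A p q (r + r') = A p q r + A p q r')
    {P Q T : ZMod 2 → Submodule R M} {S : Submodule R N}
    (hS : ∀ i j k, ∀ p ∈ P i, ∀ q ∈ Q j, ∀ r ∈ T k, A p q r ∈ S)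
    {p q r : M} (hp : p ∈ P 0 ⊔ P 1) (hq : q ∈ Q 0 ⊔ Q 1) (hr : r ∈ T 0 ⊔ T 1) :
    A p q r ∈ S := by
  obtain ⟨p₀, hp₀, p₁, hp₁, rfl⟩ := Submodule.mem_sup.1 hp
  obtain ⟨q₀, hq₀, q₁, hq₁, rfl⟩ := Submodule.mem_sup.1 hq
  obtain ⟨r₀, hr₀, r₁, hr₁, rfl⟩ := Submodule.mem_sup.1 hr
  simp only [h₁, h₂, h₃]
  repeat' apply add_mem
  all_goals apply hS <;> assumption

theorem trilinear_eq_of_homogeneous {N : Type*} [AddCommGroup N] [Module R N]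
    {A B : M → M → M → N}
    (hA₁ : ∀ p p' q r, A (p + p') q r = A p q r + A p' q r)
    (hA₂ : ∀ p q q' r, A p (q + q') r = A p q r + A p q' r)
    (hA₃ : ∀ p q r r', A p q (r + r') = A p q r + A p q r')
    (hB₁ : ∀ p p' q r, B (p + p') q r = B p q r + B p' q r)
    (hB₂ : ∀ p q q' r, B p (q + q') r = B p q r + B p q' r)
    (hB₃ : ∀ p q r r', B p q (r + r') = B p q r + B p q r')
    {P Q T : ZMod 2 → Submodule R M}
    (h : ∀ i j k, ∀ p ∈ P i, ∀ q ∈ Q j, ∀ r ∈ T k, A p q r = B p q r)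
    {p q r : M} (hp : p ∈ P 0 ⊔ P 1) (hq : q ∈ Q 0 ⊔ Q 1) (hr : r ∈ T 0 ⊔ T 1) :
    A p q r = B p q r := by
  rw [← sub_eq_zero, ← Submodule.mem_bot R]
  refine trilinear_mem_of_homogeneous (A := fun p q r => A p q r - B p q r) ?_ ?_ ?_
    (fun i j k p hp q hq r hr => ?_) hp hq hr
  · intros; simp only [hA₁, hB₁]; abel
  · intros; simp only [hA₂, hB₂]; abel
  · intros; simp only [hA₃, hB₃]; abel
  · rw [Submodule.mem_bot, sub_eq_zero]; exact h i j k p hp q hq r hr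

end Trilinear

theorem map_bracket_of_leftInverse {X : Type*} {br : X → X → X → X} {T T' : X → X}
    (hT : ∀ x y z, T (br x y z) = br (T x) (T y) (T z))
    (h₁ : Function.RightInverse T' T) (h₂ : Function.LeftInverse T' T) (x y z : X) :
    T' (br x y z) = br (T' x) (T' y) (T' z) := by
  rw [← h₂ (br (T' x) (T' y) (T' z)), hT, h₁ x, h₁ y, h₁ z]

section Graded

variable {R M : Type*} [Ring R] [AddCommGroup M] [Module R M]

theorem ZMod.eq_zero_or_eq_one (d : ZMod 2) : d = 0 ∨ d = 1 := by
  revert d; decide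

theorem Submodule.mem_of_map_mem_of_isCompl {A B : Submodule R M} (hAB : IsCompl A B)
    {T : M →ₗ[R] M} (hT : Function.Injective T) (hA : A ≤ A.comap T) (hB : B ≤ B.comap T)
    {x : M} (hx : T x ∈ A) : x ∈ A := by
  obtain ⟨a, ha, b, hb, rfl⟩ := Submodule.mem_sup.1 (hAB.sup_eq_top ▸ Submodule.mem_top (x := x))
  have hTb : T b ∈ A ⊓ B := ⟨by simpa using sub_mem hx (hA ha), hB hb⟩
  rw [hAB.inf_eq_bot, Submodule.mem_bot, map_eq_zero_iff T hT] at hTb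
  simpa [hTb] using ha

def IsGradedSubmodule (G : ZMod 2 → Submodule R M) (S : Submodule R M) : Prop :=
  S ≤ S ⊓ G 0 ⊔ S ⊓ G 1

variable {G : ZMod 2 → Submodule R M}

theorem inf_le_sup_inf_zmod_two (S : Submodule R M) (d : ZMod 2) :
    S ⊓ G d ≤ S ⊓ G 0 ⊔ S ⊓ G 1 := by
  rcases ZMod.eq_zero_or_eq_one d with rfl | rfl
  exacts [le_sup_left, le_sup_right]

theorem mem_sup_of_isCompl (hG : IsCompl (G 0) (G 1)) (x : M) : x ∈ G 0 ⊔ G 1 :=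
  hG.sup_eq_top ▸ Submodule.mem_top

theorem mem_of_map_mem_of_grading (hG : IsCompl (G 0) (G 1))
    {T : M →ₗ[R] M} (hT : Function.Injective T) (hTG : ∀ d, G d ≤ (G d).comap T)
    {d : ZMod 2} {x : M} (hx : T x ∈ G d) : x ∈ G d := by
  rcases ZMod.eq_zero_or_eq_one d with rfl | rfl
  · exact Submodule.mem_of_map_mem_of_isCompl hG hT (hTG 0) (hTG 1) hx
  · exact Submodule.mem_of_map_mem_of_isCompl hG.symm hT (hTG 1) (hTG 0) hx

end Graded

section Projection

variable {R M : Type*} [CommRing R] [AddCommGroup M] [Module R M]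

theorem Submodule.projection_mem_of_le_sup_inf {A B S : Submodule R M} (hAB : IsCompl A B)
    (hS : S ≤ S ⊓ A ⊔ S ⊓ B) {x : M} (hx : x ∈ S) : A.projection B hAB x ∈ S := by
  obtain ⟨a, ha, b, hb, rfl⟩ := Submodule.mem_sup.1 (hS hx)
  rw [map_add, Submodule.projection_apply_of_mem_left hAB ha.2,
    Submodule.projection_apply_of_mem_right hAB hb.2, add_zero]
  exact ha.1

theorem Submodule.comp_projection_mem_dualAnnihilator {A B S : Submodule R M}
    (hAB : IsCompl A B) (hS : S ≤ S ⊓ A ⊔ S ⊓ B) {f : Module.Dual R M}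
    (hf : f ∈ S.dualAnnihilator) :
    f ∘ₗ A.projection B hAB ∈ S.dualAnnihilator ⊓ B.dualAnnihilator := by
  simp only [Submodule.mem_inf, Submodule.mem_dualAnnihilator, LinearMap.comp_apply]
  exact ⟨fun s hs => (Submodule.mem_dualAnnihilator f).1 hf _
      (Submodule.projection_mem_of_le_sup_inf hAB hS hs),
    fun b hb => by rw [Submodule.projection_apply_of_mem_right hAB hb, map_zero]⟩

theorem IsGradedSubmodule.dualAnnihilator {G : ZMod 2 → Submodule R M}
    (hG : IsCompl (G 0) (G 1)) {S : Submodule R M} (hS : IsGradedSubmodule G S) :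
    IsGradedSubmodule (fun d => (G (d + 1)).dualAnnihilator) S.dualAnnihilator := by
  intro f hf
  have hS' : S ≤ S ⊓ G 1 ⊔ S ⊓ G 0 := sup_comm (S ⊓ G 0) _ ▸ hS
  have hf_eq : f = f ∘ₗ (G 0).projection (G 1) hG + f ∘ₗ (G 1).projection (G 0) hG.symm := by
    ext x; simp [← map_add, Submodule.projection_add_projection_eq_self]
  show f ∈ S.dualAnnihilator ⊓ (G (0 + 1)).dualAnnihilator ⊔
    S.dualAnnihilator ⊓ (G (1 + 1)).dualAnnihilator
  rw [show (1 : ZMod 2) + 1 = 0 from rfl, zero_add, hf_eq]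
  exact Submodule.add_mem_sup (Submodule.comp_projection_mem_dualAnnihilator hG hS hf)
    (Submodule.comp_projection_mem_dualAnnihilator hG.symm hS' hf)

theorem LinearMap.dualMap_mem_dualAnnihilator {S : Submodule R M} {T : M →ₗ[R] M}
    (hT : S ≤ S.comap T) {f : Module.Dual R M} (hf : f ∈ S.dualAnnihilator) :
    T.dualMap f ∈ S.dualAnnihilator :=
  (Submodule.mem_dualAnnihilator _).2 fun _ hs =>
    (Submodule.mem_dualAnnihilator f).1 hf _ (hT hs)

end Projection

section TripleSpan

variable {𝕜 V : Type*} [Field 𝕜] [AddCommGroup V] [Module 𝕜 V] {br : V → V → V → V}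

theorem tripleSpan_le_iff {P Q R S : Submodule 𝕜 V} :
    tripleSpan 𝕜 br P Q R ≤ S ↔ ∀ x ∈ P, ∀ y ∈ Q, ∀ z ∈ R, br x y z ∈ S := by
  simp only [tripleSpan, Submodule.span_le, Set.ofPred_subset, SetLike.mem_coe]
  constructor
  · exact fun h x hx y hy z hz => h _ ⟨x, hx, y, hy, z, hz, rfl⟩
  · rintro h _ ⟨x, hx, y, hy, z, hz, rfl⟩
    exact h x hx y hy z hz

theorem tripleSpan_mono_left {P P' Q R : Submodule 𝕜 V} (h : P ≤ P') :
    tripleSpan 𝕜 br P Q R ≤ tripleSpan 𝕜 br P' Q R :=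
  Submodule.span_mono fun _ ⟨x, hx, y, hy, z, hz, hw⟩ => ⟨x, h hx, y, hy, z, hz, hw⟩

theorem bracket_mem_lowerSeries3_succ {n : ℕ} {x : V} (hx : x ∈ lowerSeries3 𝕜 br n)
    (y z : V) : br x y z ∈ lowerSeries3 𝕜 br (n + 1) :=
  Submodule.subset_span ⟨x, hx, y, trivial, z, trivial, rfl⟩

theorem lowerSeries3_le_comap {W : Type*} [AddCommGroup W] [Module 𝕜 W]
    {br' : W → W → W → W} (f : V →ₗ[𝕜] W)
    (hf : ∀ x y z, f (br x y z) = br' (f x) (f y) (f z)) (n : ℕ) :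
    lowerSeries3 𝕜 br n ≤ (lowerSeries3 𝕜 br' n).comap f := by
  induction n with
  | zero => exact fun _ _ => trivial
  | succ n ih =>
    refine tripleSpan_le_iff.2 fun x hx y _ z _ => ?_
    rw [Submodule.mem_comap, hf]
    exact bracket_mem_lowerSeries3_succ (ih hx) _ _

theorem lowerSeries3_le_of_descent (D : ℕ → Submodule 𝕜 V)
    (hD : ∀ n, tripleSpan 𝕜 br (D (n + 1)) ⊤ ⊤ ≤ D n) {m n : ℕ}
    (h : lowerSeries3 𝕜 br m ≤ D n) : lowerSeries3 𝕜 br (m + n) ≤ D 0 := by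
  induction n generalizing m with
  | zero => exact h
  | succ n ih =>
    rw [← add_assoc, add_right_comm]
    exact ih ((tripleSpan_mono_left h).trans (hD n))

end TripleSpan

namespace Is3BiHomLieSuper

variable {𝕜 V : Type*} [Field 𝕜] [AddCommGroup V] [Module 𝕜 V] {G : ZMod 2 → Submodule 𝕜 V}
  {br : V → V → V → V} {α β : V →ₗ[𝕜] V}

theorem isCompl (halg : Is3BiHomLieSuper 𝕜 G br α β) : IsCompl (G 0) (G 1) :=
  ⟨disjoint_iff.2 halg.inf_bot, codisjoint_iff.2 halg.sup_top⟩

theorem isGraded_lowerSeries3 (halg : Is3BiHomLieSuper 𝕜 G br α β) (n : ℕ) :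
    IsGradedSubmodule G (lowerSeries3 𝕜 br n) := by
  induction n with
  | zero => simp [IsGradedSubmodule, lowerSeries3, halg.sup_top]
  | succ n ih =>
    refine tripleSpan_le_iff.2 fun x hx y _ z _ =>
      trilinear_mem_of_homogeneous halg.add₁ halg.add₂ halg.add₃
        (P := fun i => lowerSeries3 𝕜 br n ⊓ G i) (Q := G) (T := G) ?_ (ih hx)
        (mem_sup_of_isCompl halg.isCompl y) (mem_sup_of_isCompl halg.isCompl z)
    intro i j k x hx y hy z hz
    exact inf_le_sup_inf_zmod_two _ (i + j + k)
      ⟨bracket_mem_lowerSeries3_succ hx.1 y z, halg.br_grade i j k x hx.2 y hy z hz⟩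

theorem bracket_mem_lowerSeries3_succ_of_homogeneous (halg : Is3BiHomLieSuper 𝕜 G br α β)
    {n : ℕ} {i j k : ZMod 2} {x y z : V} (hx : x ∈ G i) (hy : y ∈ G j)
    (hz : z ∈ lowerSeries3 𝕜 br n ⊓ G k) :
    br (β x) (β y) (α z) ∈ lowerSeries3 𝕜 br (n + 1) := by
  rw [halg.skew₂ j k y hy z hz.2 x, halg.skew₁ i k x hx z hz.2 y]
  exact Submodule.smul_mem _ _ <| Submodule.smul_mem _ _ <|
    bracket_mem_lowerSeries3_succ (lowerSeries3_le_comap β halg.mult_β n hz.1) _ _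

theorem bracket_mem_lowerSeries3_succ_of_mem_right (halg : Is3BiHomLieSuper 𝕜 G br α β)
    {αi βi : V →ₗ[𝕜] V} (hαi₁ : Function.RightInverse αi α) (hαi₂ : Function.LeftInverse αi α)
    (hβi : Function.RightInverse βi β) {n : ℕ} (x y : V) {z : V}
    (hz : z ∈ lowerSeries3 𝕜 br n) : br x y z ∈ lowerSeries3 𝕜 br (n + 1) := by
  have hαiz : αi z ∈ lowerSeries3 𝕜 br n :=
    lowerSeries3_le_comap αi (map_bracket_of_leftInverse halg.mult_α hαi₁ hαi₂) n hz
  rw [← hβi x, ← hβi y, ← hαi₁ z]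
  refine trilinear_mem_of_homogeneous (A := fun x y z => br (β x) (β y) (α z))
    (fun _ _ _ _ => by simp only [map_add, halg.add₁])
    (fun _ _ _ _ => by simp only [map_add, halg.add₂])
    (fun _ _ _ _ => by simp only [map_add, halg.add₃])
    (P := G) (Q := G) (T := fun k => lowerSeries3 𝕜 br n ⊓ G k)
    (fun _ _ _ _ hx _ hy _ hz => halg.bracket_mem_lowerSeries3_succ_of_homogeneous hx hy hz)
    (mem_sup_of_isCompl halg.isCompl _) (mem_sup_of_isCompl halg.isCompl _)
    (halg.isGraded_lowerSeries3 n hαiz)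

end Is3BiHomLieSuper

section TThetaExtension

variable {𝕜 V : Type*} [Field 𝕜] [AddCommGroup V] [Module 𝕜 V] {G : ZMod 2 → Submodule 𝕜 V}
  {br : V → V → V → V} {α β αi βi : V →ₗ[𝕜] V}
  {ρ : V → V → Module.Dual 𝕜 V →ₗ[𝕜] Module.Dual 𝕜 V} {θ : V → V → V → Module.Dual 𝕜 V}
  {Br : V × Module.Dual 𝕜 V → V × Module.Dual 𝕜 V → V × Module.Dual 𝕜 V →
    V × Module.Dual 𝕜 V}

def IsCoadjointRep (G : ZMod 2 → Submodule 𝕜 V) (br : V → V → V → V)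
    (ρ : V → V → Module.Dual 𝕜 V →ₗ[𝕜] Module.Dual 𝕜 V) : Prop :=
  ∀ (i j d : ZMod 2), ∀ x ∈ G i, ∀ y ∈ G j, ∀ h ∈ (G (d + 1)).dualAnnihilator, ∀ z : V,
    ρ x y h z = -((-1 : 𝕜) ^ (d.val * (i.val + j.val))) * h (br x y z)

def IsTThetaBracket (G : ZMod 2 → Submodule 𝕜 V) (br : V → V → V → V) (α β αi βi : V →ₗ[𝕜] V)
    (ρ : V → V → Module.Dual 𝕜 V →ₗ[𝕜] Module.Dual 𝕜 V) (θ : V → V → V → Module.Dual 𝕜 V)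
    (Br : V × Module.Dual 𝕜 V → V × Module.Dual 𝕜 V → V × Module.Dual 𝕜 V →
      V × Module.Dual 𝕜 V) : Prop :=
  ∀ (i j k : ZMod 2) (u v w : V) (x y z : Module.Dual 𝕜 V),
    u ∈ G i → x ∈ (G (i + 1)).dualAnnihilator →
    v ∈ G j → y ∈ (G (j + 1)).dualAnnihilator →
    w ∈ G k → z ∈ (G (k + 1)).dualAnnihilator →
    Br (u, x) (v, y) (w, z) =
      (br u v w,
        θ u v w + ρ u v z -
          (-1 : 𝕜) ^ (j.val * k.val) • ρ u (αi (β w)) (α.dualMap (βi.dualMap y)) +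
          (-1 : 𝕜) ^ (i.val * (j.val + k.val)) • ρ v (αi (β w)) (α.dualMap (βi.dualMap x)))

def extGrading (G : ZMod 2 → Submodule 𝕜 V) (d : ZMod 2) :
    Submodule 𝕜 (V × Module.Dual 𝕜 V) :=
  (G d).prod (G (d + 1)).dualAnnihilator

theorem mem_extGrading_sup (hG : IsCompl (G 0) (G 1)) (s : V × Module.Dual 𝕜 V) :
    s ∈ extGrading G 0 ⊔ extGrading G 1 := by
  rw [extGrading, extGrading, Submodule.prod_sup_prod, show (1 : ZMod 2) + 1 = 0 from rfl,
    zero_add, (Subspace.isCompl_dualAnnihilator hG).symm.sup_eq_top]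
  exact ⟨mem_sup_of_isCompl hG s.1, Submodule.mem_top⟩

theorem IsCoadjointRep.apply_mem_dualAnnihilator (hρ : IsCoadjointRep G br ρ)
    (halg : Is3BiHomLieSuper 𝕜 G br α β)
    (hαi₁ : Function.RightInverse αi α) (hαi₂ : Function.LeftInverse αi α)
    (hβi : Function.RightInverse βi β)
    {n : ℕ} {i j d : ZMod 2} {x y : V} {h : Module.Dual 𝕜 V} (hx : x ∈ G i) (hy : y ∈ G j)
    (hh : h ∈ (lowerSeries3 𝕜 br (n + 1)).dualAnnihilator ⊓ (G (d + 1)).dualAnnihilator) :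
    ρ x y h ∈ (lowerSeries3 𝕜 br n).dualAnnihilator := by
  refine (Submodule.mem_dualAnnihilator _).2 fun z hz => ?_
  rw [hρ i j d x hx y hy h hh.2 z, (Submodule.mem_dualAnnihilator h).1 hh.1 _
    (halg.bracket_mem_lowerSeries3_succ_of_mem_right hαi₁ hαi₂ hβi x y hz), mul_zero]

namespace IsTThetaBracket

theorem fst_eq (hBr : IsTThetaBracket G br α β αi βi ρ θ Br)
    (halg : Is3BiHomLieSuper 𝕜 G br α β)
    (hadd₁ : ∀ p p' q r, Br (p + p') q r = Br p q r + Br p' q r)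
    (hadd₂ : ∀ p q q' r, Br p (q + q') r = Br p q r + Br p q' r)
    (hadd₃ : ∀ p q r r', Br p q (r + r') = Br p q r + Br p q r') (p q r : V × Module.Dual 𝕜 V) :
    (Br p q r).1 = br p.1 q.1 r.1 := by
  refine trilinear_eq_of_homogeneous (A := fun p q r => (Br p q r).1)
    (B := fun p q r => br p.1 q.1 r.1)
    (fun _ _ _ _ => by simp only [hadd₁, Prod.fst_add])
    (fun _ _ _ _ => by simp only [hadd₂, Prod.fst_add])
    (fun _ _ _ _ => by simp only [hadd₃, Prod.fst_add])
    (fun _ _ _ _ => by simp only [Prod.fst_add, halg.add₁])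
    (fun _ _ _ _ => by simp only [Prod.fst_add, halg.add₂])
    (fun _ _ _ _ => by simp only [Prod.fst_add, halg.add₃])
    (P := extGrading G) (Q := extGrading G) (T := extGrading G) ?_
    (mem_extGrading_sup halg.isCompl p) (mem_extGrading_sup halg.isCompl q)
    (mem_extGrading_sup halg.isCompl r)
  rintro i j k ⟨u, x⟩ ⟨hu, hx⟩ ⟨v, y⟩ ⟨hv, hy⟩ ⟨w, z⟩ ⟨hw, hz⟩
  simp only [hBr i j k u v w x y z hu hx hv hy hw hz]

theorem mem_bot_prod_dualAnnihilator_of_homogeneous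
    (hBr : IsTThetaBracket G br α β αi βi ρ θ Br)
    (halg : Is3BiHomLieSuper 𝕜 G br α β)
    (hαi₁ : Function.RightInverse αi α) (hαi₂ : Function.LeftInverse αi α)
    (hβi₁ : Function.RightInverse βi β) (hβi₂ : Function.LeftInverse βi β)
    (hρ : IsCoadjointRep G br ρ)
    (hρsmul : ∀ (c : 𝕜) x y, ρ (c • x) y = c • ρ x y)
    (hθsmul : ∀ (c : 𝕜) (x y z : V), θ (c • x) y z = c • θ x y z)
    {n : ℕ} {i j k : ZMod 2} {f y z : Module.Dual 𝕜 V} {v w : V}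
    (hf : f ∈ (lowerSeries3 𝕜 br (n + 1)).dualAnnihilator ⊓ (G (i + 1)).dualAnnihilator)
    (hv : v ∈ G j) (hy : y ∈ (G (j + 1)).dualAnnihilator)
    (hw : w ∈ G k) (hz : z ∈ (G (k + 1)).dualAnnihilator) :
    Br (0, f) (v, y) (w, z) ∈ (⊥ : Submodule 𝕜 V).prod (lowerSeries3 𝕜 br n).dualAnnihilator := by
  have hbr : br 0 v w = 0 := by simpa using halg.smul₁ 0 0 v w
  have hθ : θ 0 v w = 0 := by simpa using hθsmul 0 0 v w
  have hρ0 : ∀ y, ρ 0 y = 0 := fun y => by simpa using hρsmul 0 0 y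
  have hβi_even (d : ZMod 2) : G d ≤ (G d).comap βi := fun x hx =>
    mem_of_map_mem_of_grading halg.isCompl hβi₂.injective (fun d => halg.β_even d)
      (by rw [hβi₁ x]; exact hx)
  have hw' : αi (β w) ∈ G k :=
    mem_of_map_mem_of_grading halg.isCompl hαi₂.injective (fun d => halg.α_even d)
      (by rw [hαi₁]; exact halg.β_even k w hw)
  have hf' : α.dualMap (βi.dualMap f) ∈
      (lowerSeries3 𝕜 br (n + 1)).dualAnnihilator ⊓ (G (i + 1)).dualAnnihilator :=
    ⟨LinearMap.dualMap_mem_dualAnnihilator (lowerSeries3_le_comap α halg.mult_α _) <|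
        LinearMap.dualMap_mem_dualAnnihilator
          (lowerSeries3_le_comap βi (map_bracket_of_leftInverse halg.mult_β hβi₁ hβi₂) _) hf.1,
      LinearMap.dualMap_mem_dualAnnihilator (halg.α_even _) <|
        LinearMap.dualMap_mem_dualAnnihilator (hβi_even _) hf.2⟩
  rw [hBr i j k 0 v w f y z (zero_mem _) hf.2 hv hy hw hz]
  simp only [hbr, hθ, hρ0, LinearMap.zero_apply, smul_zero, zero_add, sub_zero]
  exact Submodule.mem_prod.2 ⟨zero_mem _, Submodule.smul_mem _ _ <|
    hρ.apply_mem_dualAnnihilator halg hαi₁ hαi₂ hβi₁ hv hw' hf'⟩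

theorem tripleSpan_dualAnnihilator_le (hBr : IsTThetaBracket G br α β αi βi ρ θ Br)
    (halg : Is3BiHomLieSuper 𝕜 G br α β)
    (hαi₁ : Function.RightInverse αi α) (hαi₂ : Function.LeftInverse αi α)
    (hβi₁ : Function.RightInverse βi β) (hβi₂ : Function.LeftInverse βi β)
    (hρ : IsCoadjointRep G br ρ)
    (hρsmul : ∀ (c : 𝕜) x y, ρ (c • x) y = c • ρ x y)
    (hθsmul : ∀ (c : 𝕜) (x y z : V), θ (c • x) y z = c • θ x y z)
    (hadd₁ : ∀ p p' q r, Br (p + p') q r = Br p q r + Br p' q r)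
    (hadd₂ : ∀ p q q' r, Br p (q + q') r = Br p q r + Br p q' r)
    (hadd₃ : ∀ p q r r', Br p q (r + r') = Br p q r + Br p q r') (n : ℕ) :
    tripleSpan 𝕜 Br ((⊥ : Submodule 𝕜 V).prod (lowerSeries3 𝕜 br (n + 1)).dualAnnihilator) ⊤ ⊤ ≤
      (⊥ : Submodule 𝕜 V).prod (lowerSeries3 𝕜 br n).dualAnnihilator := by
  refine tripleSpan_le_iff.2 fun p hp q _ r _ =>
    trilinear_mem_of_homogeneous hadd₁ hadd₂ hadd₃
      (P := fun i => (⊥ : Submodule 𝕜 V).prod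
        ((lowerSeries3 𝕜 br (n + 1)).dualAnnihilator ⊓ (G (i + 1)).dualAnnihilator))
      (Q := extGrading G) (T := extGrading G) ?_ ?_
      (mem_extGrading_sup halg.isCompl q) (mem_extGrading_sup halg.isCompl r)
  · rintro i j k ⟨u, f⟩ ⟨hu, hf⟩ ⟨v, y⟩ ⟨hv, hy⟩ ⟨w, z⟩ ⟨hw, hz⟩
    obtain rfl : u = 0 := hu
    exact hBr.mem_bot_prod_dualAnnihilator_of_homogeneous halg hαi₁ hαi₂ hβi₁ hβi₂ hρ hρsmul
      hθsmul hf hv hy hw hz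
  · rw [Submodule.prod_sup_prod, bot_sup_eq]
    exact ⟨hp.1, (halg.isGraded_lowerSeries3 (n + 1)).dualAnnihilator halg.isCompl hp.2⟩

end IsTThetaBracket

end TThetaExtension

theorem statement15_general {𝕜 V : Type*} [Field 𝕜] [AddCommGroup V] [Module 𝕜 V]
    (G : ZMod 2 → Submodule 𝕜 V) (br : V → V → V → V) (α β : V →ₗ[𝕜] V)
    (halg : Is3BiHomLieSuper 𝕜 G br α β)
    (αi : V →ₗ[𝕜] V) (hαi₁ : ∀ x, α (αi x) = x) (hαi₂ : ∀ x, αi (α x) = x)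
    (βi : V →ₗ[𝕜] V) (hβi₁ : ∀ x, β (βi x) = x) (hβi₂ : ∀ x, βi (β x) = x)
    -- the coadjoint representation on g*
    (ρ : V → V → Module.Dual 𝕜 V →ₗ[𝕜] Module.Dual 𝕜 V)
    (hρsmul₁ : ∀ (c : 𝕜) x y, ρ (c • x) y = c • ρ x y)
    (hρ : ∀ (i j d : ZMod 2), ∀ x ∈ G i, ∀ y ∈ G j,
      ∀ h ∈ (G (d + 1)).dualAnnihilator, ∀ z : V,
      ρ x y h z = -((-1 : 𝕜) ^ (d.val * (i.val + j.val))) * h (br x y z))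
    -- a 3-cocycle with values in g*
    (θ : V → V → V → Module.Dual 𝕜 V)
    (hcoc : Is3Cocycle 𝕜 G br α β (fun d => (G (d + 1)).dualAnnihilator) ρ
      α.dualMap β.dualMap θ)
    -- the T_θ-extension bracket on g ⊕ g*
    (Br : V × Module.Dual 𝕜 V → V × Module.Dual 𝕜 V → V × Module.Dual 𝕜 V →
      V × Module.Dual 𝕜 V)
    (hadd₁ : ∀ p p' q r, Br (p + p') q r = Br p q r + Br p' q r)
    (hadd₂ : ∀ p q q' r, Br p (q + q') r = Br p q r + Br p q' r)
    (hadd₃ : ∀ p q r r', Br p q (r + r') = Br p q r + Br p q r')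
    (hBr : ∀ (i j k : ZMod 2) (u v w : V) (x y z : Module.Dual 𝕜 V),
      u ∈ G i → x ∈ (G (i + 1)).dualAnnihilator →
      v ∈ G j → y ∈ (G (j + 1)).dualAnnihilator →
      w ∈ G k → z ∈ (G (k + 1)).dualAnnihilator →
      Br (u, x) (v, y) (w, z) =
        (br u v w,
          θ u v w + ρ u v z -
            (-1 : 𝕜) ^ (j.val * k.val) • ρ u (αi (β w)) (α.dualMap (βi.dualMap y)) +
            (-1 : 𝕜) ^ (i.val * (j.val + k.val)) • ρ v (αi (β w)) (α.dualMap (βi.dualMap x))))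
    (hsolv : ∃ k, lowerSeries3 𝕜 br k = ⊥) :
    ∃ k, lowerSeries3 𝕜 Br k = ⊥ := by
  obtain ⟨K, hK⟩ := hsolv
  have hBr' : IsTThetaBracket G br α β αi βi ρ θ Br := hBr
  have hstart : lowerSeries3 𝕜 Br K ≤
      (⊥ : Submodule 𝕜 V).prod (lowerSeries3 𝕜 br K).dualAnnihilator := by
    intro s hs
    have hs₁ : s.1 ∈ lowerSeries3 𝕜 br K :=
      lowerSeries3_le_comap (LinearMap.fst 𝕜 V (Module.Dual 𝕜 V))
        (hBr'.fst_eq halg hadd₁ hadd₂ hadd₃) K hs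
    rw [hK] at hs₁
    exact ⟨hs₁, by simp [hK]⟩
  have hdescent := lowerSeries3_le_of_descent
    (fun n => (⊥ : Submodule 𝕜 V).prod (lowerSeries3 𝕜 br n).dualAnnihilator)
    (hBr'.tripleSpan_dualAnnihilator_le halg hαi₁ hαi₂ hβi₁ hβi₂ hρ hρsmul₁ hcoc.θsmul₁
      hadd₁ hadd₂ hadd₃) hstart
  rw [show lowerSeries3 𝕜 br 0 = ⊤ from rfl, Submodule.dualAnnihilator_top,
    Submodule.prod_bot] at hdescent
  exact ⟨K + K, eq_bot_iff.2 hdescent⟩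

/-- If the 3-BiHom-Lie superalgebra `g` is nilpotent, then its `T_θ`-extension `g ⊕ g*`
(with bracket built from the coadjoint representation `ad*` and a 3-cocycle `θ`) is nilpotent. -/
theorem statement15 {𝕜 V : Type*} [Field 𝕜] [AddCommGroup V] [Module 𝕜 V]
    (G : ZMod 2 → Submodule 𝕜 V) (br : V → V → V → V) (α β : V →ₗ[𝕜] V)
    (halg : Is3BiHomLieSuper 𝕜 G br α β)
    (αi : V →ₗ[𝕜] V) (hαi₁ : ∀ x, α (αi x) = x) (hαi₂ : ∀ x, αi (α x) = x)
    (βi : V →ₗ[𝕜] V) (hβi₁ : ∀ x, β (βi x) = x) (hβi₂ : ∀ x, βi (β x) = x)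
    -- the coadjoint representation on g*
    (ρ : V → V → Module.Dual 𝕜 V →ₗ[𝕜] Module.Dual 𝕜 V)
    (hρadd₁ : ∀ x x' y, ρ (x + x') y = ρ x y + ρ x' y)
    (hρsmul₁ : ∀ (c : 𝕜) x y, ρ (c • x) y = c • ρ x y)
    (hρadd₂ : ∀ x y y', ρ x (y + y') = ρ x y + ρ x y')
    (hρsmul₂ : ∀ (c : 𝕜) x y, ρ x (c • y) = c • ρ x y)
    (hρ : ∀ (i j d : ZMod 2), ∀ x ∈ G i, ∀ y ∈ G j,
      ∀ h ∈ (G (d + 1)).dualAnnihilator, ∀ z : V,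
      ρ x y h z = -((-1 : 𝕜) ^ (d.val * (i.val + j.val))) * h (br x y z))
    -- a 3-cocycle with values in g*
    (θ : V → V → V → Module.Dual 𝕜 V)
    (hcoc : Is3Cocycle 𝕜 G br α β (fun d => (G (d + 1)).dualAnnihilator) ρ
      α.dualMap β.dualMap θ)
    -- the T_θ-extension bracket on g ⊕ g*
    (Br : V × Module.Dual 𝕜 V → V × Module.Dual 𝕜 V → V × Module.Dual 𝕜 V →
      V × Module.Dual 𝕜 V)
    (hadd₁ : ∀ p p' q r, Br (p + p') q r = Br p q r + Br p' q r)
    (hsmul₁ : ∀ (c : 𝕜) p q r, Br (c • p) q r = c • Br p q r)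
    (hadd₂ : ∀ p q q' r, Br p (q + q') r = Br p q r + Br p q' r)
    (hsmul₂ : ∀ (c : 𝕜) p q r, Br p (c • q) r = c • Br p q r)
    (hadd₃ : ∀ p q r r', Br p q (r + r') = Br p q r + Br p q r')
    (hsmul₃ : ∀ (c : 𝕜) p q r, Br p q (c • r) = c • Br p q r)
    (hBr : ∀ (i j k : ZMod 2) (u v w : V) (x y z : Module.Dual 𝕜 V),
      u ∈ G i → x ∈ (G (i + 1)).dualAnnihilator →
      v ∈ G j → y ∈ (G (j + 1)).dualAnnihilator →
      w ∈ G k → z ∈ (G (k + 1)).dualAnnihilator →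
      Br (u, x) (v, y) (w, z) =
        (br u v w,
          θ u v w + ρ u v z -
            (-1 : 𝕜) ^ (j.val * k.val) • ρ u (αi (β w)) (α.dualMap (βi.dualMap y)) +
            (-1 : 𝕜) ^ (i.val * (j.val + k.val)) • ρ v (αi (β w)) (α.dualMap (βi.dualMap x))))
    (hsolv : ∃ k, lowerSeries3 𝕜 br k = ⊥) :
    ∃ k, lowerSeries3 𝕜 Br k = ⊥ :=
  statement15_general G br α β halg αi hαi₁ hαi₂ βi hβi₁ hβi₂ ρ hρsmul₁ hρ θ hcoc Br hadd₁ hadd₂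
    hadd₃ hBr hsolv
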